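/- Carnap categoricity of CPC over a set of worlds: Let W be a set and I an assignment to each connective ⊥, ∧, ∨, → of an operation of corresponding arity on the power set of W, such that whenever Γ ⊢_CPC φ, for all valuations v : Prop → P(W), the intersection of the values of Γ (computed compositionally via I) is contained in the value of φ. Then I(⊥) = ∅, I(∧) is intersection, I(∨) is union, and I(→)(U,V) = (W \ U) ∪ V. -/

import Mathlib

/-! Each connective is pinned down by a few classical consequences read off in the set semantics.
Conjunction is fixed by its introduction and elimination rules, and `⊥` by ex falso. Since
`⊢ (p ∧ q) → q`, an implication between nested sets is everything; this lets modus ponens and the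
consequence `r, (r ∧ p) → q ⊢ p → q` (with `r := Uᶜ ∪ V`) pin `Iimp U V` to `Uᶜ ∪ V` from
both sides, and disjunction is then fixed by its introduction rules together with
`p ∨ q, p → r, q → r ⊢ r` (with `r := U ∪ V`). -/

/-- Formulas of propositional logic over atoms ℕ. -/
inductive Form : Type where
  | atom : ℕ → Form
  | bot  : Form
  | and  : Form → Form → Form
  | or   : Form → Form → Form
  | imp  : Form → Form → Form

/-- Classical (two-valued) evaluation of a formula. -/
def evalB (w : ℕ → Bool) : Form → Bool
  | Form.atom p => w p
  | Form.bot => false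
  | Form.and φ ψ => evalB w φ && evalB w ψ
  | Form.or φ ψ => evalB w φ || evalB w ψ
  | Form.imp φ ψ => !evalB w φ || evalB w ψ

/-- Classical propositional consequence. -/
def CPC (Γ : Set Form) (φ : Form) : Prop :=
  ∀ w : ℕ → Bool, (∀ ψ ∈ Γ, evalB w ψ = true) → evalB w φ = true

/-- Compositional semantic value of a formula over a set of worlds W,
under an interpretation I of the connectives as operations on 𝒫(W). -/
def evalS {W : Type*} (Ibot : Set W) (Iand Ior Iimp : Set W → Set W → Set W)
    (v : ℕ → Set W) : Form → Set W
  | Form.atom p => v p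
  | Form.bot => Ibot
  | Form.and φ ψ => Iand (evalS Ibot Iand Ior Iimp v φ) (evalS Ibot Iand Ior Iimp v ψ)
  | Form.or φ ψ => Ior (evalS Ibot Iand Ior Iimp v φ) (evalS Ibot Iand Ior Iimp v ψ)
  | Form.imp φ ψ => Iimp (evalS Ibot Iand Ior Iimp v φ) (evalS Ibot Iand Ior Iimp v ψ)

open Form Set

section

variable {W : Type*}

def RespectsCPC (Ibot : Set W) (Iand Ior Iimp : Set W → Set W → Set W) : Prop :=
  ∀ (Γ : Set Form) (φ : Form), CPC Γ φ → ∀ v : ℕ → Set W,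
    ⋂₀ (evalS Ibot Iand Ior Iimp v '' Γ) ⊆ evalS Ibot Iand Ior Iimp v φ

def valuation₃ (U V X : Set W) : ℕ → Set W
  | 0 => U
  | 1 => V
  | _ => X

variable {Ibot : Set W} {Iand Ior Iimp : Set W → Set W → Set W}

namespace RespectsCPC

variable (h : RespectsCPC Ibot Iand Ior Iimp) (v : ℕ → Set W)
include h

theorem eq_univ_of_cpc_empty {φ : Form} (hφ : CPC ∅ φ) :
    evalS Ibot Iand Ior Iimp v φ = univ :=
  univ_subset_iff.mp (by simpa using h ∅ φ hφ v)

theorem subset_of_cpc_singleton {φ ψ : Form} (hψ : CPC {φ} ψ) :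
    evalS Ibot Iand Ior Iimp v φ ⊆ evalS Ibot Iand Ior Iimp v ψ := by
  simpa using h {φ} ψ hψ v

theorem inter_subset_of_cpc_pair {φ₁ φ₂ ψ : Form} (hψ : CPC {φ₁, φ₂} ψ) :
    evalS Ibot Iand Ior Iimp v φ₁ ∩ evalS Ibot Iand Ior Iimp v φ₂ ⊆
      evalS Ibot Iand Ior Iimp v ψ := by
  simpa [image_insert_eq] using h {φ₁, φ₂} ψ hψ v

theorem bot_eq_empty : Ibot = ∅ :=
  subset_empty_iff.mp <|
    h.subset_of_cpc_singleton (fun _ => ∅) (φ := bot) (ψ := atom 0) (by intro w; simp [evalB])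

theorem and_eq_inter (U V : Set W) : Iand U V = U ∩ V := by
  have left : Iand U V ⊆ U :=
    h.subset_of_cpc_singleton (valuation₃ U V ∅) (φ := and (atom 0) (atom 1)) (ψ := atom 0)
      (by intro w; simp [evalB]; cases w 0 <;> simp)
  have right : Iand U V ⊆ V :=
    h.subset_of_cpc_singleton (valuation₃ U V ∅) (φ := and (atom 0) (atom 1)) (ψ := atom 1)
      (by intro w; simp [evalB])
  have intro : U ∩ V ⊆ Iand U V :=
    h.inter_subset_of_cpc_pair (valuation₃ U V ∅) (φ₁ := atom 0) (φ₂ := atom 1)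
      (ψ := and (atom 0) (atom 1)) (by intro w; simp [evalB])
  exact (subset_inter left right).antisymm intro

theorem imp_eq_univ_of_subset {U V : Set W} (hUV : U ⊆ V) : Iimp U V = univ := by
  have := h.eq_univ_of_cpc_empty (valuation₃ U V ∅) (φ := imp (and (atom 0) (atom 1)) (atom 1))
    (by intro w; simp [evalB]; cases w 0 <;> cases w 1 <;> simp)
  simpa [evalS, valuation₃, h.and_eq_inter, inter_eq_left.mpr hUV] using this

theorem imp_eq_compl_union (U V : Set W) : Iimp U V = Uᶜ ∪ V := by
  have modusPonens : Iimp U V ∩ U ⊆ V :=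
    h.inter_subset_of_cpc_pair (valuation₃ U V ∅) (φ₁ := imp (atom 0) (atom 1)) (φ₂ := atom 0)
      (ψ := atom 1) (by intro w; simp [evalB]; cases w 0 <;> simp)
  have intro := h.inter_subset_of_cpc_pair (valuation₃ U V (Uᶜ ∪ V)) (φ₁ := atom 2)
    (φ₂ := imp (and (atom 2) (atom 0)) (atom 1)) (ψ := imp (atom 0) (atom 1))
    (by intro w; simp [evalB]; cases w 0 <;> cases w 1 <;> cases w 2 <;> simp)
  have hsub : (Uᶜ ∪ V) ∩ U ⊆ V := (inter_subset _ _ _).mpr subset_rfl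
  simp only [evalS, valuation₃, h.and_eq_inter, h.imp_eq_univ_of_subset hsub, inter_univ] at intro
  exact ((inter_subset _ _ _).mp modusPonens).antisymm intro

theorem or_eq_union (U V : Set W) : Ior U V = U ∪ V := by
  have left : U ⊆ Ior U V :=
    h.subset_of_cpc_singleton (valuation₃ U V ∅) (φ := atom 0) (ψ := or (atom 0) (atom 1))
      (by intro w; simp [evalB]; cases w 0 <;> simp)
  have right : V ⊆ Ior U V :=
    h.subset_of_cpc_singleton (valuation₃ U V ∅) (φ := atom 1) (ψ := or (atom 0) (atom 1))
      (by intro w; simp [evalB]; cases w 0 <;> cases w 1 <;> simp)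
  have elim := h {or (atom 0) (atom 1), imp (atom 0) (atom 2), imp (atom 1) (atom 2)} (atom 2)
    (by intro w; simp [evalB]; cases w 0 <;> cases w 1 <;> cases w 2 <;> simp)
    (valuation₃ U V (U ∪ V))
  simp only [image_insert_eq, image_singleton, sInter_insert, sInter_singleton, evalS, valuation₃,
    h.imp_eq_univ_of_subset subset_union_left, h.imp_eq_univ_of_subset subset_union_right,
    inter_univ] at elim
  exact elim.antisymm (union_subset left right)

end RespectsCPC

end

/-- Carnap categoricity of CPC over a set of worlds W: any interpretation of the
connectives as operations on 𝒫(W) consistent with ⊢_CPC is the standard one. -/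
theorem carnap_categoricity_CPC {W : Type*}
    (Ibot : Set W) (Iand Ior Iimp : Set W → Set W → Set W)
    (hcons : ∀ (Γ : Set Form) (φ : Form), CPC Γ φ →
      ∀ v : ℕ → Set W,
        ⋂₀ (evalS Ibot Iand Ior Iimp v '' Γ) ⊆ evalS Ibot Iand Ior Iimp v φ) :
    Ibot = (∅ : Set W) ∧
    (∀ U V : Set W, Iand U V = U ∩ V) ∧
    (∀ U V : Set W, Ior U V = U ∪ V) ∧
    (∀ U V : Set W, Iimp U V = Uᶜ ∪ V) :=
  have h : RespectsCPC Ibot Iand Ior Iimp := hcons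
  ⟨h.bot_eq_empty, h.and_eq_inter, h.or_eq_union, h.imp_eq_compl_union⟩
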